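/- arXiv:2109.08063 — 4 statements merged into one kernel-verified Lean document; each statement's English description precedes it below -/
import Mathlib

section
/- Consider a generative predictive coding network with layers l = 0,…,L. For every layer l with 0 < l ≤ L and every index i with 1 ≤ i ≤ n_l, the partial derivative of the energy E with respect to the value node x^l_i equals ε^l_i − f'(x^l_i) · Σ_{k=1}^{n_{l−1}} ε^{l−1}_k · θ^l_{k,i}; consequently the inference update Δx^l_i = −γ · ∂E/∂x^l_i is γ·( −ε^l_i + f'(x^l_i) Σ_{k=1}^{n_{l−1}} ε^{l−1}_k θ^l_{k,i} ). -/
/-!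
Moving the single node `x^l_i` changes only two kinds of terms of the energy: its own error
`ε^l_i`, at rate `1`, and the errors `ε^{l-1}_k` of the layer below, whose predictions depend on
`x^l_i` through `θ^l_{k,i} f(x^l_i)`, at rate `-θ^l_{k,i} f'(x^l_i)`. Every other error is
constant in `x^l_i`: the prediction of a layer depends only on the layer above it.
-/

open Finset

theorem HasDerivAt.sum_mul_comp_ite {ι : Type*} [DecidableEq ι] {f : ℝ → ℝ} {f' : ℝ}
    {s : Finset ι} {i : ι} (c y : ι → ℝ) (hf : HasDerivAt f f' (y i)) (hi : i ∈ s) :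
    HasDerivAt (fun t => ∑ j ∈ s, c j * f (if j = i then t else y j)) (c i * f') (y i) := by
  have hterm : ∀ j ∈ s, HasDerivAt (fun t => c j * f (if j = i then t else y j))
      (if j = i then c i * f' else 0) (y i) := by
    intro j _
    split_ifs with hj
    · subst hj
      simpa using hf.const_mul (c j)
    · exact hasDerivAt_const _ _
  simpa [sum_ite_eq', hi] using HasDerivAt.fun_sum hterm

namespace PredictiveCoding

variable (L : ℕ) (n : ℕ → ℕ) (θ : ℕ → ℕ → ℕ → ℝ) (b : ℕ → ℝ) (f : ℝ → ℝ)

def perturb (y : ℕ → ℕ → ℝ) (l i : ℕ) (t : ℝ) : ℕ → ℕ → ℝ :=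
  fun l' i' => if l' = l ∧ i' = i then t else y l' i'

def prediction (y : ℕ → ℕ → ℝ) (l i : ℕ) : ℝ :=
  if l = L then b i else ∑ j ∈ range (n (l + 1)), θ (l + 1) i j * f (y (l + 1) j)

def error (y : ℕ → ℕ → ℝ) (l i : ℕ) : ℝ :=
  y l i - prediction L n θ b f y l i

variable {L n θ b f}

theorem perturb_self (y : ℕ → ℕ → ℝ) (l i : ℕ) : perturb y l i (y l i) = y := by
  funext l' i'
  unfold perturb
  split_ifs with h
  · rw [h.1, h.2]
  · rfl

theorem hasDerivAt_perturb_apply (y : ℕ → ℕ → ℝ) (l i l' i' : ℕ) :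
    HasDerivAt (fun t => perturb y l i t l' i') (if l' = l ∧ i' = i then 1 else 0) (y l i) := by
  unfold perturb
  split_ifs
  · exact hasDerivAt_id _
  · exact hasDerivAt_const _ _

theorem prediction_perturb_of_succ_ne {l l' : ℕ} (y : ℕ → ℕ → ℝ) (i i' : ℕ) (t : ℝ)
    (h : l' + 1 ≠ l) :
    prediction L n θ b f (perturb y l i t) l' i' = prediction L n θ b f y l' i' := by
  simp only [prediction, perturb, h, false_and, if_false]

theorem hasDerivAt_prediction_perturb {f' : ℝ → ℝ} (hf : ∀ y, HasDerivAt f (f' y) y)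
    (y : ℕ → ℕ → ℝ) {l i : ℕ} (l' i' : ℕ) (hlL : l ≤ L) (hi : i < n l) :
    HasDerivAt (fun t => prediction L n θ b f (perturb y l i t) l' i')
      (if l' + 1 = l then θ l i' i * f' (y l i) else 0) (y l i) := by
  split_ifs with h
  · subst h
    simp only [prediction, perturb, if_neg (show l' ≠ L by omega), true_and]
    exact HasDerivAt.sum_mul_comp_ite _ (y (l' + 1)) (hf _) (mem_range.2 hi)
  · simp only [prediction_perturb_of_succ_ne y i i' _ h]
    exact hasDerivAt_const _ _

theorem sum_error_mul_sub_eq {l i : ℕ} (e : ℕ → ℕ → ℝ) (c : ℝ)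
    (hl0 : 0 < l) (hlL : l ≤ L) (hi : i < n l) :
    (1 / 2 : ℝ) * ∑ l' ∈ range (L + 1), ∑ i' ∈ range (n l'),
        2 * e l' i' * ((if l' = l ∧ i' = i then 1 else 0) -
          if l' + 1 = l then θ l i' i * c else 0)
      = e l i - c * ∑ k ∈ range (n (l - 1)), e (l - 1) k * θ l k i := by
  have hsucc : ∀ l', l' + 1 = l ↔ l' = l - 1 := fun l' => by omega
  simp only [hsucc, mul_sub, sum_sub_distrib, mul_ite, mul_one, mul_zero, ite_and,
    sum_ite_irrel, sum_const_zero, sum_ite_eq', mem_range, if_pos hi,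
    if_pos (show l < L + 1 by omega), if_pos (show l - 1 < L + 1 by omega), mul_sum]
  congr 1
  · ring
  · exact sum_congr rfl fun k _ => by ring

theorem hasDerivAt_energy_perturb {f' : ℝ → ℝ} (hf : ∀ y, HasDerivAt f (f' y) y)
    (y : ℕ → ℕ → ℝ) {l i : ℕ} (hl0 : 0 < l) (hlL : l ≤ L) (hi : i < n l) :
    HasDerivAt (fun t => (1 / 2 : ℝ) * ∑ l' ∈ range (L + 1), ∑ i' ∈ range (n l'),
        error L n θ b f (perturb y l i t) l' i' ^ 2)
      (error L n θ b f y l i -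
        f' (y l i) * ∑ k ∈ range (n (l - 1)), error L n θ b f y (l - 1) k * θ l k i) (y l i) := by
  have hterm : ∀ l' i', HasDerivAt (fun t => error L n θ b f (perturb y l i t) l' i' ^ 2)
      (2 * error L n θ b f y l' i' * ((if l' = l ∧ i' = i then 1 else 0) -
        if l' + 1 = l then θ l i' i * f' (y l i) else 0)) (y l i) := by
    intro l' i'
    have h := ((hasDerivAt_perturb_apply y l i l' i').fun_sub
      (hasDerivAt_prediction_perturb (θ := θ) (b := b) hf y l' i' hlL hi)).fun_pow 2
    simpa only [error, perturb_self, Nat.cast_ofNat, Nat.add_one_sub_one, pow_one] using h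
  rw [← sum_error_mul_sub_eq (error L n θ b f y) (f' (y l i)) hl0 hlL hi]
  exact (HasDerivAt.fun_sum fun l' _ => HasDerivAt.fun_sum fun i' _ => hterm l' i').const_mul _

end PredictiveCoding

open PredictiveCoding in
/-- In a generative predictive coding network with layers `0,…,L`,
for every layer `0 < l ≤ L` and every index `i < n l`, the partial derivative of the
energy `E` with respect to the value node `x^l_i` equals
`ε^l_i − f'(x^l_i) · Σ_k ε^{l−1}_k · θ^l_{k,i}`; consequently the inference update
`Δx^l_i = −γ · ∂E/∂x^l_i` equals `γ·(−ε^l_i + f'(x^l_i) Σ_k ε^{l−1}_k θ^l_{k,i})`. -/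
theorem pcn_inference_update
    (L : ℕ) (n : ℕ → ℕ)
    (x : ℕ → ℕ → ℝ)               -- value nodes: `x l i` is `x^l_i`
    (θ : ℕ → ℕ → ℕ → ℝ)           -- weights: `θ l k i` is `θ^l_{k,i}` (layer `l` to layer `l-1`)
    (b : ℕ → ℝ)                    -- memory vector
    (f f' : ℝ → ℝ) (hf : ∀ y : ℝ, HasDerivAt f (f' y) y)
    (μ ε : ℕ → ℕ → ℝ)
    (hμ : ∀ l i, μ l i =
      if l = L then b i
      else ∑ j ∈ Finset.range (n (l + 1)), θ (l + 1) i j * f (x (l + 1) j))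
    (hε : ∀ l i, ε l i = x l i - μ l i)
    (E : (ℕ → ℕ → ℝ) → ℝ)
    (hE : ∀ y : ℕ → ℕ → ℝ, E y =
      (1 / 2) * ∑ l ∈ Finset.range (L + 1), ∑ i ∈ Finset.range (n l),
        (y l i - (if l = L then b i
          else ∑ j ∈ Finset.range (n (l + 1)), θ (l + 1) i j * f (y (l + 1) j))) ^ 2)
    (l i : ℕ) (hl0 : 0 < l) (hlL : l ≤ L) (hi : i < n l) (γ : ℝ) :
    HasDerivAt (fun t : ℝ => E (fun l' i' => if l' = l ∧ i' = i then t else x l' i'))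
      (ε l i - f' (x l i) * ∑ k ∈ Finset.range (n (l - 1)), ε (l - 1) k * θ l k i)
      (x l i)
    ∧ -γ * (ε l i - f' (x l i) * ∑ k ∈ Finset.range (n (l - 1)), ε (l - 1) k * θ l k i)
      = γ * (-ε l i + f' (x l i) * ∑ k ∈ Finset.range (n (l - 1)), ε (l - 1) k * θ l k i) := by
  refine ⟨?_, by ring⟩
  have hε' : ε = error L n θ b f x := funext₂ fun l i => by rw [hε, hμ]; rfl
  rw [hε']
  simp only [hE]
  exact hasDerivAt_energy_perturb hf x hl0 hlL hi
end

section
/- Let θ ∈ ℝ^{d×n} and b ∈ ℝ^n, and define the retrieval map F : ℝ^d → ℝ^d by F(c) = θ(I + θᵀθ)⁻¹(θᵀc + b). Then there exists a constant k with 0 ≤ k < 1 such that ‖F(c) − F(c')‖ ≤ k‖c − c'‖ for all c, c' ∈ ℝ^d; equivalently, the operator norm of the symmetric matrix θ(I + θᵀθ)⁻¹θᵀ is strictly less than 1. -/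
/-!
Put `z = (1 + θᵀθ)⁻¹ θᵀ x`, so that `θ (1 + θᵀθ)⁻¹ θᵀ x = θ z`. Pairing `(1 + θᵀθ) z = θᵀ x`
with `z` gives `⟪x, θ z⟫ = ‖z‖² + ‖θ z‖²`, and expanding `0 ≤ ‖x - θ z‖²` yields
`‖θ z‖² + 2 ‖z‖² ≤ ‖x‖²`. Hence the linear part of the retrieval map shrinks every nonzero vector
(and, taking `x = 0`, `1 + θᵀθ` is injective). In finite dimension the operator norm is attained on
the compact unit ball, so it is strictly less than `1`.
-/

open Matrix Metric

namespace ContinuousLinearMap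

variable {𝕜 E F : Type*} [DenselyNormedField 𝕜] [NormedAddCommGroup E] [NormedSpace 𝕜 E]
  [ProperSpace E] [SeminormedAddCommGroup F] [NormedSpace 𝕜 F]

theorem exists_mem_closedBall_norm_apply_eq_opNorm (f : E →L[𝕜] F) :
    ∃ x ∈ closedBall (0 : E) 1, ‖f x‖ = ‖f‖ := by
  have hcompact : IsCompact ((‖f ·‖) '' closedBall 0 1) :=
    (isCompact_closedBall 0 1).image (by fun_prop)
  simpa [← f.sSup_unitClosedBall_eq_norm] using
    hcompact.sSup_mem ((nonempty_closedBall.mpr zero_le_one).image _)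

theorem opNorm_lt_one_of_norm_apply_lt (f : E →L[𝕜] F) (h : ∀ x ≠ 0, ‖f x‖ < ‖x‖) :
    ‖f‖ < 1 := by
  obtain ⟨x, hx, hfx⟩ := f.exists_mem_closedBall_norm_apply_eq_opNorm
  rw [← hfx]
  rcases eq_or_ne x 0 with rfl | hx0
  · simp
  · exact (h x hx0).trans_le (mem_closedBall_zero_iff.mp hx)

end ContinuousLinearMap

namespace Matrix

variable {R m n : Type*} [Fintype m] [Fintype n]

theorem one_add_transpose_mul_self_mulVec [CommRing R] [DecidableEq n] (θ : Matrix m n R)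
    (v : n → R) : (1 + θᵀ * θ) *ᵥ v = v + θᵀ *ᵥ θ *ᵥ v := by
  rw [add_mulVec, one_mulVec, mulVec_mulVec]

section OrderedRing

variable [CommRing R] [LinearOrder R] [IsStrictOrderedRing R]

theorem dotProduct_self_nonneg (v : n → R) : 0 ≤ v ⬝ᵥ v :=
  Finset.sum_nonneg fun i _ => mul_self_nonneg (v i)

theorem dotProduct_self_pos {v : n → R} (hv : v ≠ 0) : 0 < v ⬝ᵥ v :=
  (dotProduct_self_nonneg v).lt_of_ne' (dotProduct_self_eq_zero.not.mpr hv)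

theorem dotProduct_self_mulVec_add_two_mul_le (θ : Matrix m n R) {x : m → R} {z : n → R}
    (hz : z + θᵀ *ᵥ θ *ᵥ z = θᵀ *ᵥ x) :
    (θ *ᵥ z) ⬝ᵥ (θ *ᵥ z) + 2 * (z ⬝ᵥ z) ≤ x ⬝ᵥ x := by
  have hcross : x ⬝ᵥ θ *ᵥ z = z ⬝ᵥ z + (θ *ᵥ z) ⬝ᵥ (θ *ᵥ z) := by
    rw [dotProduct_mulVec, ← mulVec_transpose, ← hz, add_dotProduct, mulVec_transpose,
      ← dotProduct_mulVec]
  have hsq := dotProduct_self_nonneg (x - θ *ᵥ z)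
  simp only [sub_dotProduct, dotProduct_sub, dotProduct_comm (θ *ᵥ z) x, hcross] at hsq
  linarith

end OrderedRing

variable {K : Type*} [Field K] [LinearOrder K] [IsStrictOrderedRing K] [DecidableEq n]

theorem isUnit_one_add_transpose_mul_self (θ : Matrix m n K) : IsUnit (1 + θᵀ * θ) := by
  refine mulVec_injective_iff_isUnit.mp fun z w hzw => ?_
  have hkernel : (z - w) + θᵀ *ᵥ θ *ᵥ (z - w) = θᵀ *ᵥ 0 := by
    rw [mulVec_zero, ← one_add_transpose_mul_self_mulVec, mulVec_sub, hzw, sub_self]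
  have henergy := dotProduct_self_mulVec_add_two_mul_le θ hkernel
  rw [dotProduct_zero] at henergy
  have hθ := dotProduct_self_nonneg (θ *ᵥ (z - w))
  exact sub_eq_zero.mp (dotProduct_self_eq_zero.mp
    (le_antisymm (by linarith) (dotProduct_self_nonneg _)))

noncomputable def retrievalMatrix (θ : Matrix m n K) : Matrix m m K :=
  θ * (1 + θᵀ * θ)⁻¹ * θᵀ

theorem dotProduct_self_retrievalMatrix_mulVec_lt {θ : Matrix m n K} {x : m → K} (hx : x ≠ 0) :
    (retrievalMatrix θ *ᵥ x) ⬝ᵥ (retrievalMatrix θ *ᵥ x) < x ⬝ᵥ x := by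
  set z := (1 + θᵀ * θ)⁻¹ *ᵥ θᵀ *ᵥ x
  have hz : z + θᵀ *ᵥ θ *ᵥ z = θᵀ *ᵥ x := by
    rw [← one_add_transpose_mul_self_mulVec, mulVec_mulVec,
      mul_nonsing_inv _ ((isUnit_one_add_transpose_mul_self θ).map detMonoidHom), one_mulVec]
  have hMx : retrievalMatrix θ *ᵥ x = θ *ᵥ z := by
    rw [retrievalMatrix, mulVec_mulVec, mulVec_mulVec, Matrix.mul_assoc]
  have henergy := dotProduct_self_mulVec_add_two_mul_le θ hz
  rw [hMx]
  rcases eq_or_ne z 0 with hz0 | hz0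
  · simpa [hz0] using dotProduct_self_pos hx
  · have hzz := dotProduct_self_pos hz0
    linarith

end Matrix

namespace EuclideanSpace

variable {n : Type*} [Fintype n]

theorem norm_toLp_eq_sqrt (v : n → ℝ) : ‖WithLp.toLp 2 v‖ = √(∑ i, v i ^ 2) := by
  simp [EuclideanSpace.norm_eq]

theorem norm_toLp_sq (v : n → ℝ) : ‖WithLp.toLp 2 v‖ ^ 2 = v ⬝ᵥ v := by
  rw [← real_inner_self_eq_norm_sq, inner_toLp_toLp, star_trivial]

end EuclideanSpace

theorem Matrix.norm_toEuclideanLin_retrievalMatrix_lt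
    {m n : Type*} [Fintype m] [Fintype n] [DecidableEq m] [DecidableEq n] (θ : Matrix m n ℝ)
    {x : EuclideanSpace ℝ m} (hx : x ≠ 0) :
    ‖toEuclideanLin (retrievalMatrix θ) x‖ < ‖x‖ := by
  obtain ⟨v, rfl⟩ : ∃ v, x = WithLp.toLp 2 v := ⟨x.ofLp, rfl⟩
  refine lt_of_pow_lt_pow_left₀ 2 (norm_nonneg _) ?_
  rw [toLpLin_toLp, toLin'_apply, EuclideanSpace.norm_toLp_sq, EuclideanSpace.norm_toLp_sq]
  exact dotProduct_self_retrievalMatrix_mulVec_lt (by simpa using hx)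

/-- For `θ ∈ ℝ^{d×n}`, `b ∈ ℝ^n`, and the retrieval map
`F(c) = θ(I + θᵀθ)⁻¹(θᵀc + b)`, there exists a constant `0 ≤ k < 1` such that
`‖F(c) − F(c')‖ ≤ k‖c − c'‖` for all `c, c' ∈ ℝ^d` (Euclidean norms written via
`Real.sqrt` of sums of squares); equivalently, the operator norm of the symmetric
matrix `θ(I + θᵀθ)⁻¹θᵀ` (as a map between Euclidean spaces) is strictly less than 1. -/
theorem pcn_retrieval_map_contraction
    (d m : ℕ) (θ : Matrix (Fin d) (Fin m) ℝ) (b : Fin m → ℝ)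
    (F : (Fin d → ℝ) → (Fin d → ℝ))
    (hF : ∀ c : Fin d → ℝ, F c = θ.mulVec ((1 + θᵀ * θ)⁻¹.mulVec (θᵀ.mulVec c + b))) :
    (∃ k : ℝ, 0 ≤ k ∧ k < 1 ∧ ∀ c c' : Fin d → ℝ,
      Real.sqrt (∑ i, (F c i - F c' i) ^ 2) ≤ k * Real.sqrt (∑ i, (c i - c' i) ^ 2))
    ∧ ‖LinearMap.toContinuousLinearMap
        (Matrix.toEuclideanLin (θ * (1 + θᵀ * θ)⁻¹ * θᵀ))‖ < 1 := by
  set M := θ * (1 + θᵀ * θ)⁻¹ * θᵀ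
  set T := LinearMap.toContinuousLinearMap (toEuclideanLin M)
  have hT : ‖T‖ < 1 :=
    T.opNorm_lt_one_of_norm_apply_lt fun _ => norm_toEuclideanLin_retrievalMatrix_lt θ
  refine ⟨⟨‖T‖, norm_nonneg T, hT, fun c c' => ?_⟩, hT⟩
  have hdiff : F c - F c' = M *ᵥ (c - c') := by
    rw [hF, hF, ← mulVec_sub, ← mulVec_sub, add_sub_add_right_eq_sub, ← mulVec_sub,
      mulVec_mulVec, mulVec_mulVec]
  calc √(∑ i, (F c i - F c' i) ^ 2) = ‖T (WithLp.toLp 2 (c - c'))‖ := by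
        change _ = ‖WithLp.toLp 2 (M *ᵥ (c - c'))‖
        rw [← hdiff, EuclideanSpace.norm_toLp_eq_sqrt]; rfl
    _ ≤ ‖T‖ * ‖WithLp.toLp 2 (c - c')‖ := T.le_opNorm _
    _ = ‖T‖ * √(∑ i, (c i - c' i) ^ 2) := by rw [EuclideanSpace.norm_toLp_eq_sqrt]; rfl
end

section
/- Let θ ∈ ℝ^{d×n}, b ∈ ℝ^n, and define F : ℝ^d → ℝ^d by F(c) = θ(I + θᵀθ)⁻¹(θᵀc + b). If the stored data point s ∈ ℝ^d satisfies s = θb (zero-energy storage), then F(s) = s, and for every c ∈ ℝ^d the iterates F^m(c) converge to s as m → ∞; in particular s is an attractor of the retrieval dynamics whose basin is all of ℝ^d. -/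
/-!
Writing `M = 1 + θᵀθ` and `A = θ M⁻¹ θᵀ`, one has `θᵀc + b = θᵀ(c - θb) + Mb`, so
`F c = θb + A (c - θb)`: the retrieval map is affine with fixed point `θb` and linear part `A`.
The matrix `A` is positive semidefinite, and by the Woodbury identity `1 - A = (1 + θθᵀ)⁻¹` is
positive definite, so the eigenvalues of the symmetric matrix `A` lie in `[0, 1)` and `A ^ k → 0`.
-/

open Filter Topology Unitary
open scoped ComplexOrder

namespace Matrix

section Affine

variable {R : Type*} [CommRing R] {n : Type*} [Fintype n] [DecidableEq n]

theorem iterate_eq_add_pow_mulVec_sub {A : Matrix n n R} {F : (n → R) → n → R} {s : n → R}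
    (hF : ∀ x, F x = s + A *ᵥ (x - s)) (k : ℕ) (c : n → R) :
    F^[k] c = s + (A ^ k) *ᵥ (c - s) := by
  induction k with
  | zero => simp
  | succ k ih =>
    rw [Function.iterate_succ_apply', ih, hF, add_sub_cancel_left, mulVec_mulVec, pow_succ']

theorem tendsto_iterate_of_eq_add_mulVec_sub [TopologicalSpace R] [IsTopologicalRing R]
    {A : Matrix n n R} {F : (n → R) → n → R} {s : n → R}
    (hF : ∀ x, F x = s + A *ᵥ (x - s)) (hA : Tendsto (A ^ ·) atTop (𝓝 0)) (c : n → R) :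
    Tendsto (F^[·] c) atTop (𝓝 s) := by
  have hcont : Continuous fun B : Matrix n n R ↦ s + B *ᵥ (c - s) := by fun_prop
  simpa [Function.comp_def, iterate_eq_add_pow_mulVec_sub hF] using (hcont.tendsto 0).comp hA

end Affine

variable {𝕜 : Type*} [RCLike 𝕜] {m n : Type*} [Fintype m] [Fintype n] [DecidableEq n]

theorem IsHermitian.eigenvalues_lt_one {A : Matrix n n 𝕜} (hA : A.IsHermitian)
    (h : (1 - A).PosDef) (i : n) : hA.eigenvalues i < 1 := by
  rw [hA.spectral_theorem, ← map_one (conjStarAlgAut 𝕜 _ hA.eigenvectorUnitary), ← map_sub,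
    conjStarAlgAut_apply, IsUnit.posDef_star_right_conjugate_iff Unitary.isUnit_coe, ← diagonal_one,
    diagonal_sub, posDef_diagonal_iff] at h
  exact_mod_cast (by simpa using h i : (hA.eigenvalues i : 𝕜) < 1)

theorem IsHermitian.tendsto_pow_atTop_nhds_zero {A : Matrix n n 𝕜} (hA : A.IsHermitian)
    (h : ∀ i, |hA.eigenvalues i| < 1) : Tendsto (A ^ ·) atTop (𝓝 0) := by
  set U : Matrix n n 𝕜 := ↑hA.eigenvectorUnitary
  set D : n → 𝕜 := RCLike.ofReal ∘ hA.eigenvalues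
  have hpow (k : ℕ) : A ^ k = U * diagonal (D ^ k) * star U := by
    conv_lhs => rw [hA.spectral_theorem]
    rw [← map_pow, diagonal_pow, conjStarAlgAut_apply]
  have hdiag : Tendsto (fun k : ℕ ↦ diagonal (D ^ k)) atTop (𝓝 0) := by
    rw [← diagonal_zero]
    refine (continuous_id.matrix_diagonal.tendsto _).comp (tendsto_pi_nhds.2 fun i ↦ ?_)
    simpa using tendsto_pow_atTop_nhds_zero_of_norm_lt_one (by simpa [D] using h i)
  have hcont : Continuous fun X : Matrix n n 𝕜 ↦ U * X * star U := by fun_prop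
  simpa [Function.comp_def, hpow] using (hcont.tendsto 0).comp hdiag

theorem posDef_one_add_conjTranspose_mul_self (θ : Matrix m n 𝕜) : (1 + θᴴ * θ).PosDef :=
  PosDef.one.add_posSemidef (posSemidef_conjTranspose_mul_self θ)

theorem mulVec_inv_one_add_conjTranspose_mul_self_mulVec_add (θ : Matrix m n 𝕜) (b : n → 𝕜)
    (c : m → 𝕜) :
    θ *ᵥ ((1 + θᴴ * θ)⁻¹ *ᵥ (θᴴ *ᵥ c + b)) =
      θ *ᵥ b + (θ * (1 + θᴴ * θ)⁻¹ * θᴴ) *ᵥ (c - θ *ᵥ b) := by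
  have hM : IsUnit (1 + θᴴ * θ).det :=
    (isUnit_iff_isUnit_det _).1 (posDef_one_add_conjTranspose_mul_self θ).isUnit
  have hsplit : θᴴ *ᵥ c + b = θᴴ *ᵥ (c - θ *ᵥ b) + (1 + θᴴ * θ) *ᵥ b := by
    rw [mulVec_sub, add_mulVec, one_mulVec, mulVec_mulVec]
    abel
  rw [hsplit, mulVec_add, mulVec_mulVec b, nonsing_inv_mul _ hM, one_mulVec, mulVec_add, add_comm,
    mulVec_mulVec, mulVec_mulVec, Matrix.mul_assoc]

theorem one_sub_mul_inv_one_add_conjTranspose_mul_self_mul [DecidableEq m] (θ : Matrix m n 𝕜) :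
    1 - θ * (1 + θᴴ * θ)⁻¹ * θᴴ = (1 + θ * θᴴ)⁻¹ := by
  have := add_mul_mul_inv_eq_sub 1 θ 1 θᴴ isUnit_one isUnit_one
    (by simpa using (posDef_one_add_conjTranspose_mul_self θ).isUnit)
  simpa using this.symm

theorem tendsto_pow_mul_inv_one_add_conjTranspose_mul_self_mul [DecidableEq m]
    (θ : Matrix m n 𝕜) : Tendsto ((θ * (1 + θᴴ * θ)⁻¹ * θᴴ) ^ ·) atTop (𝓝 0) := by
  have hA : (θ * (1 + θᴴ * θ)⁻¹ * θᴴ).PosSemidef :=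
    (posDef_one_add_conjTranspose_mul_self θ).inv.posSemidef.mul_mul_conjTranspose_same θ
  have hA' : (1 - θ * (1 + θᴴ * θ)⁻¹ * θᴴ).PosDef := by
    rw [one_sub_mul_inv_one_add_conjTranspose_mul_self_mul]
    simpa using (posDef_one_add_conjTranspose_mul_self θᴴ).inv
  exact hA.isHermitian.tendsto_pow_atTop_nhds_zero fun i ↦
    abs_lt.2 ⟨by linarith [hA.eigenvalues_nonneg i], hA.isHermitian.eigenvalues_lt_one hA' i⟩

end Matrix

open Matrix

/-- For `θ ∈ ℝ^{d×n}`, `b ∈ ℝ^n`, and the retrieval map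
`F(c) = θ(I + θᵀθ)⁻¹(θᵀc + b)`, if the stored data point `s ∈ ℝ^d` satisfies
`s = θb` (zero-energy storage), then `F(s) = s`, and for every `c ∈ ℝ^d` the
iterates `F^m(c)` converge to `s` as `m → ∞`; in particular `s` is an attractor of
the retrieval dynamics whose basin is all of `ℝ^d`. -/
theorem pcn_retrieval_map_attractor
    (d m : ℕ) (θ : Matrix (Fin d) (Fin m) ℝ) (b : Fin m → ℝ) (s : Fin d → ℝ)
    (F : (Fin d → ℝ) → (Fin d → ℝ))
    (hF : ∀ c : Fin d → ℝ, F c = θ.mulVec ((1 + θᵀ * θ)⁻¹.mulVec (θᵀ.mulVec c + b)))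
    (hs : s = θ.mulVec b) :
    F s = s
    ∧ (∀ c : Fin d → ℝ, Filter.Tendsto (fun k : ℕ => F^[k] c) Filter.atTop (nhds s)) := by
  have hstep (c : Fin d → ℝ) : F c = s + (θ * (1 + θᴴ * θ)⁻¹ * θᴴ) *ᵥ (c - s) := by
    rw [hF, ← conjTranspose_eq_transpose_of_trivial,
      mulVec_inv_one_add_conjTranspose_mul_self_mulVec_add, hs]
  exact ⟨by simpa using hstep s, tendsto_iterate_of_eq_add_mulVec_sub hstep
    (tendsto_pow_mul_inv_one_add_conjTranspose_mul_self_mul θ)⟩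
end

section
/- Let θ₁, θ₂, b ∈ ℝ and define the two-hidden-layer retrieval map F : ℝ → ℝ by F(c) = θ₁ x₁*, where (x₁*, x₂*) is the unique minimizer over (x₁, x₂) ∈ ℝ² of E_c(x₁, x₂) = ½(c − θ₁x₁)² + ½(x₁ − θ₂x₂)² + ½(x₂ − b)². Then F is affine with slope θ₁²(1 + θ₂²)/(1 + θ₁²(1 + θ₂²)), which lies in [0, 1), so F is a contraction on ℝ; moreover, if s = θ₁θ₂b, then F(s) = s and F^m(c) → s as m → ∞ for every c ∈ ℝ. -/
/-- For `θ₁, θ₂, b ∈ ℝ`, the two-hidden-layer retrieval map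
`F(c) = θ₁ x₁*`, where `(x₁*, x₂*)` is the unique minimizer of
`E_c(x₁, x₂) = ½(c − θ₁x₁)² + ½(x₁ − θ₂x₂)² + ½(x₂ − b)²`, is affine with slope
`θ₁²(1 + θ₂²)/(1 + θ₁²(1 + θ₂²))`, which lies in `[0, 1)`, so `F` is a contraction
on `ℝ`; moreover, if `s = θ₁θ₂b`, then `F(s) = s` and `F^m(c) → s` as `m → ∞` for
every `c ∈ ℝ`. -/
theorem pcn_two_layer_retrieval
    (θ₁ θ₂ b s : ℝ)
    (xstar : ℝ → ℝ × ℝ)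
    (hmin : ∀ c : ℝ, ∀ p : ℝ × ℝ, p ≠ xstar c →
      (1 / 2) * (c - θ₁ * (xstar c).1) ^ 2 + (1 / 2) * ((xstar c).1 - θ₂ * (xstar c).2) ^ 2
        + (1 / 2) * ((xstar c).2 - b) ^ 2
      < (1 / 2) * (c - θ₁ * p.1) ^ 2 + (1 / 2) * (p.1 - θ₂ * p.2) ^ 2
        + (1 / 2) * (p.2 - b) ^ 2)
    (F : ℝ → ℝ) (hF : ∀ c : ℝ, F c = θ₁ * (xstar c).1) :
    (∀ c c' : ℝ, F c - F c' =
      θ₁ ^ 2 * (1 + θ₂ ^ 2) / (1 + θ₁ ^ 2 * (1 + θ₂ ^ 2)) * (c - c'))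
    ∧ 0 ≤ θ₁ ^ 2 * (1 + θ₂ ^ 2) / (1 + θ₁ ^ 2 * (1 + θ₂ ^ 2))
    ∧ θ₁ ^ 2 * (1 + θ₂ ^ 2) / (1 + θ₁ ^ 2 * (1 + θ₂ ^ 2)) < 1
    ∧ ContractingWith
        (Real.toNNReal (θ₁ ^ 2 * (1 + θ₂ ^ 2) / (1 + θ₁ ^ 2 * (1 + θ₂ ^ 2)))) F
    ∧ (s = θ₁ * θ₂ * b →
        F s = s ∧ ∀ c : ℝ, Filter.Tendsto (fun m : ℕ => F^[m] c) Filter.atTop (nhds s)) := by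
  set D : ℝ := 1 + θ₁ ^ 2 * (1 + θ₂ ^ 2) with hD
  have hDpos : 0 < D := by positivity
  have hDne : D ≠ 0 := ne_of_gt hDpos
  set k : ℝ := θ₁ ^ 2 * (1 + θ₂ ^ 2) / D with hk
  -- explicit formula for the minimizer
  have key : ∀ c : ℝ, xstar c =
      ((θ₁ * (1 + θ₂ ^ 2) * c + θ₂ * b) / D, (θ₁ * θ₂ * c + (1 + θ₁ ^ 2) * b) / D) := by
    intro c
    set a1 : ℝ := (θ₁ * (1 + θ₂ ^ 2) * c + θ₂ * b) / D
    set a2 : ℝ := (θ₁ * θ₂ * c + (1 + θ₁ ^ 2) * b) / D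
    have e1 : (1 + θ₁ ^ 2) * a1 = θ₁ * c + θ₂ * a2 := by
      simp only [a1, a2]; field_simp; ring
    have e2 : (1 + θ₂ ^ 2) * a2 = θ₂ * a1 + b := by
      simp only [a1, a2]; field_simp; ring
    have hmin' : ∀ q : ℝ × ℝ,
        (1 / 2) * (c - θ₁ * a1) ^ 2 + (1 / 2) * (a1 - θ₂ * a2) ^ 2 + (1 / 2) * (a2 - b) ^ 2
        ≤ (1 / 2) * (c - θ₁ * q.1) ^ 2 + (1 / 2) * (q.1 - θ₂ * q.2) ^ 2
          + (1 / 2) * (q.2 - b) ^ 2 := by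
      intro q
      have hdiff : ((1 / 2) * (c - θ₁ * q.1) ^ 2 + (1 / 2) * (q.1 - θ₂ * q.2) ^ 2
            + (1 / 2) * (q.2 - b) ^ 2)
          - ((1 / 2) * (c - θ₁ * a1) ^ 2 + (1 / 2) * (a1 - θ₂ * a2) ^ 2
            + (1 / 2) * (a2 - b) ^ 2)
          = (1 / 2) * (θ₁ * (q.1 - a1)) ^ 2 + (1 / 2) * ((q.1 - a1) - θ₂ * (q.2 - a2)) ^ 2
            + (1 / 2) * (q.2 - a2) ^ 2 := by
        linear_combination (q.1 - a1) * e1 + (q.2 - a2) * e2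
      nlinarith [sq_nonneg (θ₁ * (q.1 - a1)), sq_nonneg ((q.1 - a1) - θ₂ * (q.2 - a2)),
        sq_nonneg (q.2 - a2)]
    by_contra hne
    have h1 := hmin c (a1, a2) (fun h => hne h.symm)
    have h2 := hmin' (xstar c)
    simp only at h1
    linarith
  have hFc : ∀ c : ℝ, F c = (θ₁ ^ 2 * (1 + θ₂ ^ 2) * c + θ₁ * θ₂ * b) / D := by
    intro c
    rw [hF c, key c]
    field_simp
  have hslope : ∀ c c' : ℝ, F c - F c' = k * (c - c') := by
    intro c c'
    rw [hFc c, hFc c', div_sub_div_same, hk, div_mul_eq_mul_div]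
    congr 1
    ring
  have hk0 : 0 ≤ k := by positivity
  have hk1 : k < 1 := by
    rw [hk, div_lt_one hDpos]
    simp only [hD]
    linarith
  have hlip : LipschitzWith (Real.toNNReal k) F := by
    apply LipschitzWith.of_dist_le_mul
    intro x y
    rw [Real.dist_eq, Real.dist_eq, hslope x y, abs_mul, abs_of_nonneg hk0,
      Real.coe_toNNReal k hk0]
  have hcontr : ContractingWith (Real.toNNReal k) F := ⟨Real.toNNReal_lt_one.mpr hk1, hlip⟩
  refine ⟨hslope, hk0, hk1, hcontr, ?_⟩
  intro hs
  have hfix : F s = s := by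
    rw [hFc s, hs]
    field_simp
    ring
  refine ⟨hfix, fun c => ?_⟩
  have hfp : Function.IsFixedPt F s := hfix
  have := hcontr.tendsto_iterate_fixedPoint c
  rwa [hcontr.fixedPoint_unique hfp]
end
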